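/- arXiv:1008.0831 — 8 statements merged into one kernel-verified Lean document; each statement's English description precedes it below -/
import Mathlib

section
/- For any lattice L ⊆ 2^[n] (a family of subsets closed under union and intersection), the Hamming distance function d_L(S) = min_{T ∈ L} |S Δ T| is submodular, i.e., d_L(S ∪ T) + d_L(S ∩ T) ≤ d_L(S) + d_L(T) for all S, T ⊆ [n]. -/
open scoped symmDiff
open Finset

/-!
Choose `A, B ∈ L` nearest to `S` and `T`. Since `A ∪ B` and `A ∩ B` lie in `L`, it suffices to show
`|(S ∪ T) ∆ (A ∪ B)| + |(S ∩ T) ∆ (A ∩ B)| ≤ |S ∆ A| + |T ∆ B|`. Writing `X, Y` for the left-hand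
sets and `P, Q` for the right-hand ones, `X ∪ Y ⊆ P ∪ Q` and `X ∩ Y ⊆ P ∩ Q`, so
`|X| + |Y| = |X ∪ Y| + |X ∩ Y| ≤ |P ∪ Q| + |P ∩ Q| = |P| + |Q|`.
-/

namespace Finset

variable {α : Type*} [DecidableEq α]

lemma card_add_card_le_of_union_subset_of_inter_subset {X Y P Q : Finset α}
    (hunion : X ∪ Y ⊆ P ∪ Q) (hinter : X ∩ Y ⊆ P ∩ Q) : #X + #Y ≤ #P + #Q := by
  rw [← card_union_add_card_inter X, ← card_union_add_card_inter P]
  exact Nat.add_le_add (card_le_card hunion) (card_le_card hinter)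

lemma card_symmDiff_union_add_card_symmDiff_inter_le (S T A B : Finset α) :
    #((S ∪ T) ∆ (A ∪ B)) + #((S ∩ T) ∆ (A ∩ B)) ≤ #(S ∆ A) + #(T ∆ B) := by
  apply card_add_card_le_of_union_subset_of_inter_subset <;>
  · intro x
    simp only [mem_union, mem_inter, mem_symmDiff]
    tauto

end Finset

theorem lattice_hamming_distance_submodular (n : ℕ)
    (L : Finset (Finset (Fin n))) (hL : L.Nonempty)
    (hunion : ∀ A ∈ L, ∀ B ∈ L, A ∪ B ∈ L)
    (hinter : ∀ A ∈ L, ∀ B ∈ L, A ∩ B ∈ L) :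
    ∀ S T : Finset (Fin n),
      L.inf' hL (fun U => ((S ∪ T) ∆ U).card) +
        L.inf' hL (fun U => ((S ∩ T) ∆ U).card) ≤
      L.inf' hL (fun U => (S ∆ U).card) +
        L.inf' hL (fun U => (T ∆ U).card) := by
  intro S T
  obtain ⟨A, hA, hS⟩ := exists_mem_eq_inf' hL fun U => #(S ∆ U)
  obtain ⟨B, hB, hT⟩ := exists_mem_eq_inf' hL fun U => #(T ∆ U)
  rw [hS, hT]
  calc _ ≤ #((S ∪ T) ∆ (A ∪ B)) + #((S ∩ T) ∆ (A ∩ B)) :=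
        Nat.add_le_add (inf'_le _ (hunion A hA B hB)) (inf'_le _ (hinter A hA B hB))
    _ ≤ #(S ∆ A) + #(T ∆ B) := card_symmDiff_union_add_card_symmDiff_inter_le S T A B
end

section
/- If f : {0,1}^n → ℝ is submodular and f(0) > 0, then f is nonzero on at least 2^{n-1} points of {0,1}^n. -/
/-- `f` has monotone non-increasing discrete derivatives. -/
def SubmodularMarginals {n : ℕ} (f : Finset (Fin n) → ℝ) : Prop :=
  ∀ (i : Fin n) (S T : Finset (Fin n)), S ⊆ T → i ∉ T →
    f (insert i T) - f T ≤ f (insert i S) - f S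

/-!
Induct on the ground set, adding one element `i` at a time, and split the subsets into those
without `i` and their translates `insert i S`. If `f {i} > 0`, both `f` and `S ↦ f (insert i S)`
are submodular and positive at `∅`, so each half contributes the inductive bound. If
`f {i} ≤ 0 < f ∅`, submodularity gives `f (insert i S) - f S ≤ f {i} - f ∅ < 0`, so `f` cannot
vanish at both `S` and `insert i S`, and every pair contributes a nonzero value.
-/

open Finset

lemma Finset.card_filter_powerset_insert {α : Type*} [DecidableEq α] {s : Finset α} {a : α}
    (ha : a ∉ s) (p : Finset α → Prop) [DecidablePred p] :
    #{t ∈ (insert a s).powerset | p t} =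
      #{t ∈ s.powerset | p t} + #{t ∈ s.powerset | p (insert a t)} := by
  simp only [card_filter, sum_powerset_insert ha]

lemma Finset.card_le_card_filter_add_card_filter {α : Type*} {s : Finset α}
    {p q : α → Prop} [DecidablePred p] [DecidablePred q] (h : ∀ x ∈ s, p x ∨ q x) :
    #s ≤ #{x ∈ s | p x} + #{x ∈ s | q x} :=
  calc #s = #{x ∈ s | p x ∨ q x} := by rw [filter_true_of_mem h]
    _ ≤ _ := by classical rw [filter_or]; exact card_union_le _ _

namespace SubmodularMarginals

variable {n : ℕ} {f : Finset (Fin n) → ℝ}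

lemma comp_insert (hf : SubmodularMarginals f) (i : Fin n) :
    SubmodularMarginals (fun S => f (insert i S)) := by
  intro j S T hST hjT
  by_cases hji : j = i
  · subst hji
    simp
  · simp only [insert_comm i j]
    exact hf j _ _ (insert_subset_insert i hST) (by simp [hji, hjT])

lemma ne_zero_or_insert_ne_zero (hf : SubmodularMarginals f) {i : Fin n} (hi : f {i} < f ∅)
    {S : Finset (Fin n)} (hiS : i ∉ S) : f S ≠ 0 ∨ f (insert i S) ≠ 0 := by
  by_contra! hS
  have := hf i ∅ S (empty_subset S) hiS
  rw [hS.1, hS.2, insert_empty_eq] at this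
  linarith

theorem two_pow_card_le_two_mul_card_ne_zero (hf : SubmodularMarginals f) (h0 : 0 < f ∅)
    (u : Finset (Fin n)) : 2 ^ #u ≤ 2 * #{S ∈ u.powerset | f S ≠ 0} := by
  induction u using Finset.induction_on generalizing f with
  | empty => simp [filter_singleton, h0.ne']
  | @insert i s hi ih =>
    rw [card_insert_of_notMem hi, card_filter_powerset_insert hi, pow_succ, mul_comm _ 2]
    gcongr 2 * ?_
    by_cases hfi : 0 < f {i}
    · have hwithout := ih hf h0
      have hwith := ih (hf.comp_insert i) (by simpa using hfi)
      omega
    · have hpair : ∀ S ∈ s.powerset, f S ≠ 0 ∨ f (insert i S) ≠ 0 := fun S hS =>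
        hf.ne_zero_or_insert_ne_zero (by linarith) fun h => hi (mem_powerset.mp hS h)
      simpa using card_le_card_filter_add_card_filter hpair

end SubmodularMarginals

theorem submodular_pos_at_bottom_many_nonzero (n : ℕ)
    (f : Finset (Fin n) → ℝ) (hf : SubmodularMarginals f) (h0 : 0 < f ∅) :
    2 ^ (n - 1) ≤
      (Finset.univ.filter (fun S : Finset (Fin n) => f S ≠ 0)).card := by
  have h := hf.two_pow_card_le_two_mul_card_ne_zero h0 univ
  rw [powerset_univ, card_univ, Fintype.card_fin] at h
  rcases n with _ | n
  · simp only [pow_zero, zero_tsub] at h ⊢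
    omega
  · rw [pow_succ] at h
    rw [Nat.add_sub_cancel]
    omega
end

section
/- Let n be even and f : {0,1}^n → ℝ submodular with f(x) < 0 for some x with ||x||_1 = n/2. Then f is nonzero on at least 2^{n/2} points of {0,1}^n. -/
lemma submod_union_aux {n : ℕ} {f : Finset (Fin n) → ℝ} (hf : SubmodularMarginals f) :
    ∀ (U S T : Finset (Fin n)), S ⊆ T → Disjoint U T →
      f (T ∪ U) - f T ≤ f (S ∪ U) - f S := by
  intro U
  induction U using Finset.induction_on with
  | empty => intro S T hST _; simp
  | @insert i U hiU ih =>
    intro S T hST hdisj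
    have hiT : i ∉ T := (Finset.disjoint_insert_left.mp hdisj).1
    have hdU : Disjoint U T := (Finset.disjoint_insert_left.mp hdisj).2
    have hiTU : i ∉ T ∪ U := by simp [hiT, hiU]
    have hsub : S ∪ U ⊆ T ∪ U := Finset.union_subset_union_left hST
    have hiSU : i ∉ S ∪ U := fun h => hiTU (hsub h)
    have h1 := hf i (S ∪ U) (T ∪ U) hsub hiTU
    have h2 := ih S T hST hdU
    rw [Finset.union_insert, Finset.union_insert]
    linarith

theorem submodular_neg_in_middle_many_nonzero (n : ℕ) (hn : Even n)
    (f : Finset (Fin n) → ℝ) (hf : SubmodularMarginals f)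
    (x : Finset (Fin n)) (hx : x.card = n / 2) (hneg : f x < 0) :
    2 ^ (n / 2) ≤
      (Finset.univ.filter (fun S : Finset (Fin n) => f S ≠ 0)).card := by
  classical
  have hfx : f x ≠ 0 := ne_of_lt hneg
  set m := n / 2 with hm
  have hxc : xᶜ.card = m := by
    have := Finset.card_compl x
    obtain ⟨k, hk⟩ := hn
    simp only [Fintype.card_fin] at this
    omega
  set N := Finset.univ.filter (fun S : Finset (Fin n) => f S ≠ 0) with hN
  set L := x.powerset.filter (fun A => f A ≠ 0) with hLdef
  set ZL := x.powerset.filter (fun A => f A = 0) with hZLdef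
  set U := xᶜ.powerset.filter (fun C => f (x ∪ C) ≠ 0) with hUdef
  set ZU := xᶜ.powerset.filter (fun C => f (x ∪ C) = 0) with hZUdef
  -- disjointness of C from x when C ⊆ xᶜ
  have hdisjx : ∀ C : Finset (Fin n), C ⊆ xᶜ → Disjoint C x := by
    intro C hC
    exact Finset.disjoint_left.mpr (fun a ha => Finset.mem_compl.mp (hC ha))
  -- key inequality: A ⊆ x, C ⊆ xᶜ, f A = 0, f (x ∪ C) = 0 → f (A ∪ C) ≠ 0
  have hkey : ∀ A C : Finset (Fin n), A ⊆ x → C ⊆ xᶜ → f A = 0 → f (x ∪ C) = 0 →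
      f (A ∪ C) ≠ 0 := by
    intro A C hA hC hfA hfxC
    have h := submod_union_aux hf C A x hA (hdisjx C hC)
    rw [hfA, hfxC] at h
    intro h0
    rw [h0] at h
    linarith
  -- the three families
  set L' := L.erase x with hL'def
  set U' := U.image (fun C => x ∪ C) with hU'def
  set M := (ZL ×ˢ ZU).image (fun p => p.1 ∪ p.2) with hMdef
  -- decomposition lemma: recover A and C from A ∪ C
  have hrec : ∀ A C : Finset (Fin n), A ⊆ x → C ⊆ xᶜ →
      (A ∪ C) ∩ x = A ∧ (A ∪ C) \ x = C := by
    intro A C hA hC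
    constructor
    · ext a
      simp only [Finset.mem_inter, Finset.mem_union]
      constructor
      · rintro ⟨h1 | h1, h2⟩
        · exact h1
        · exact absurd h2 (Finset.mem_compl.mp (hC h1))
      · intro h; exact ⟨Or.inl h, hA h⟩
    · ext a
      simp only [Finset.mem_sdiff, Finset.mem_union]
      constructor
      · rintro ⟨h1 | h1, h2⟩
        · exact absurd (hA h1) h2
        · exact h1
      · intro h; exact ⟨Or.inr h, Finset.mem_compl.mp (hC h)⟩
  -- cardinalities
  have hcardL : L.card + ZL.card = 2 ^ m := by
    have h := Finset.card_filter_add_card_filter_not (s := x.powerset)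
      (p := fun A => f A ≠ 0)
    rw [Finset.card_powerset, hx] at h
    have e : (x.powerset.filter fun A => ¬ f A ≠ 0) = ZL := by
      rw [hZLdef]; congr 1; ext A; simp [not_not]
    rw [← hLdef, e] at h
    exact h
  have hcardU : U.card + ZU.card = 2 ^ m := by
    have h := Finset.card_filter_add_card_filter_not (s := xᶜ.powerset)
      (p := fun C => f (x ∪ C) ≠ 0)
    rw [Finset.card_powerset, hxc] at h
    have e : (xᶜ.powerset.filter fun C => ¬ f (x ∪ C) ≠ 0) = ZU := by
      rw [hZUdef]; congr 1; ext C; simp [not_not]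
    rw [← hUdef, e] at h
    exact h
  have hLpos : 1 ≤ L.card := by
    have : x ∈ L := by
      rw [hLdef]; simp [Finset.mem_filter, Finset.mem_powerset, hfx]
    exact Finset.card_pos.mpr ⟨x, this⟩
  have hUpos : 1 ≤ U.card := by
    have : (∅ : Finset (Fin n)) ∈ U := by
      rw [hUdef]; simp [Finset.mem_filter, Finset.mem_powerset, hfx]
    exact Finset.card_pos.mpr ⟨∅, this⟩
  have hLle : L.card ≤ 2 ^ m := by omega
  -- card of U' and M
  have hcardU' : U'.card = U.card := by
    rw [hU'def]
    apply Finset.card_image_of_injOn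
    intro C1 h1 C2 h2 heq
    have hC1 : C1 ⊆ xᶜ := Finset.mem_powerset.mp (Finset.mem_filter.mp h1).1
    have hC2 : C2 ⊆ xᶜ := Finset.mem_powerset.mp (Finset.mem_filter.mp h2).1
    have heq' : x ∪ C1 = x ∪ C2 := heq
    calc C1 = (x ∪ C1) \ x := ((hrec x C1 (subset_refl x) hC1).2).symm
    _ = (x ∪ C2) \ x := by rw [heq']
    _ = C2 := (hrec x C2 (subset_refl x) hC2).2
  have hcardM : M.card = ZL.card * ZU.card := by
    rw [hMdef]
    rw [Finset.card_image_of_injOn, Finset.card_product]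
    intro p hp q hq heq
    simp only [Finset.mem_coe, Finset.mem_product] at hp hq
    have hA1 : p.1 ⊆ x := Finset.mem_powerset.mp (Finset.mem_filter.mp hp.1).1
    have hC1 : p.2 ⊆ xᶜ := Finset.mem_powerset.mp (Finset.mem_filter.mp hp.2).1
    have hA2 : q.1 ⊆ x := Finset.mem_powerset.mp (Finset.mem_filter.mp hq.1).1
    have hC2 : q.2 ⊆ xᶜ := Finset.mem_powerset.mp (Finset.mem_filter.mp hq.2).1
    have e1 := hrec p.1 p.2 hA1 hC1
    have e2 := hrec q.1 q.2 hA2 hC2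
    have heq' : p.1 ∪ p.2 = q.1 ∪ q.2 := heq
    have : p.1 = q.1 := by
      calc p.1 = (p.1 ∪ p.2) ∩ x := e1.1.symm
      _ = (q.1 ∪ q.2) ∩ x := by rw [heq']
      _ = q.1 := e2.1
    have : p.2 = q.2 := by
      calc p.2 = (p.1 ∪ p.2) \ x := e1.2.symm
      _ = (q.1 ∪ q.2) \ x := by rw [heq']
      _ = q.2 := e2.2
    exact Prod.ext ‹p.1 = q.1› ‹p.2 = q.2›
  -- all three families are in N
  have hL'N : L' ⊆ N := by
    intro S hS
    have := Finset.mem_of_mem_erase hS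
    rw [hN]
    simp only [Finset.mem_filter, Finset.mem_univ, true_and]
    exact (Finset.mem_filter.mp this).2
  have hU'N : U' ⊆ N := by
    intro S hS
    rw [hU'def] at hS
    obtain ⟨C, hC, rfl⟩ := Finset.mem_image.mp hS
    rw [hN]
    simp only [Finset.mem_filter, Finset.mem_univ, true_and]
    exact (Finset.mem_filter.mp hC).2
  have hMN : M ⊆ N := by
    intro S hS
    rw [hMdef] at hS
    obtain ⟨p, hp, rfl⟩ := Finset.mem_image.mp hS
    rw [Finset.mem_product] at hp
    have hA : p.1 ⊆ x := Finset.mem_powerset.mp (Finset.mem_filter.mp hp.1).1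
    have hC : p.2 ⊆ xᶜ := Finset.mem_powerset.mp (Finset.mem_filter.mp hp.2).1
    have hfA : f p.1 = 0 := (Finset.mem_filter.mp hp.1).2
    have hfxC : f (x ∪ p.2) = 0 := (Finset.mem_filter.mp hp.2).2
    rw [hN]
    simp only [Finset.mem_filter, Finset.mem_univ, true_and]
    exact hkey p.1 p.2 hA hC hfA hfxC
  -- disjointness
  have hdLU : Disjoint L' U' := by
    rw [Finset.disjoint_left]
    intro S hSL hSU
    have hSx : S ⊆ x := Finset.mem_powerset.mp
      (Finset.mem_filter.mp (Finset.mem_of_mem_erase hSL)).1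
    have hSne : S ≠ x := Finset.ne_of_mem_erase hSL
    rw [hU'def] at hSU
    obtain ⟨C, _, rfl⟩ := Finset.mem_image.mp hSU
    exact hSne (Finset.Subset.antisymm hSx Finset.subset_union_left)
  have hdLM : Disjoint L' M := by
    rw [Finset.disjoint_left]
    intro S hSL hSM
    have hSx : S ⊆ x := Finset.mem_powerset.mp
      (Finset.mem_filter.mp (Finset.mem_of_mem_erase hSL)).1
    rw [hMdef] at hSM
    obtain ⟨p, hp, rfl⟩ := Finset.mem_image.mp hSM
    rw [Finset.mem_product] at hp
    have hC : p.2 ⊆ xᶜ := Finset.mem_powerset.mp (Finset.mem_filter.mp hp.2).1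
    have hfxC : f (x ∪ p.2) = 0 := (Finset.mem_filter.mp hp.2).2
    have hCne : p.2 ≠ ∅ := by
      intro h; rw [h, Finset.union_empty] at hfxC; exact hfx hfxC
    apply hCne
    apply Finset.eq_empty_of_forall_notMem
    intro a ha
    have hax : a ∈ x := hSx (Finset.mem_union_right _ ha)
    exact Finset.mem_compl.mp (hC ha) hax
  have hdUM : Disjoint U' M := by
    rw [Finset.disjoint_left]
    intro S hSU hSM
    rw [hU'def] at hSU
    obtain ⟨C, _, rfl⟩ := Finset.mem_image.mp hSU
    rw [hMdef] at hSM
    obtain ⟨p, hp, heq⟩ := Finset.mem_image.mp hSM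
    rw [Finset.mem_product] at hp
    have hA : p.1 ⊆ x := Finset.mem_powerset.mp (Finset.mem_filter.mp hp.1).1
    have hC2 : p.2 ⊆ xᶜ := Finset.mem_powerset.mp (Finset.mem_filter.mp hp.2).1
    have hfA : f p.1 = 0 := (Finset.mem_filter.mp hp.1).2
    have hAx : p.1 = x := by
      apply Finset.Subset.antisymm hA
      intro a hax
      have : a ∈ p.1 ∪ p.2 := by rw [heq]; exact Finset.mem_union_left _ hax
      rcases Finset.mem_union.mp this with h | h
      · exact h
      · exact absurd hax (Finset.mem_compl.mp (hC2 h))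
    rw [hAx] at hfA
    exact hfx hfA
  -- assemble
  have hsubN : L' ∪ U' ∪ M ⊆ N := by
    intro S hS
    rcases Finset.mem_union.mp hS with h | h
    · rcases Finset.mem_union.mp h with h' | h'
      · exact hL'N h'
      · exact hU'N h'
    · exact hMN h
  have hcard1 : (L' ∪ U' ∪ M).card = L'.card + U'.card + M.card := by
    rw [Finset.card_union_of_disjoint, Finset.card_union_of_disjoint hdLU]
    exact Finset.disjoint_union_left.mpr ⟨hdLM, hdUM⟩
  have hcardL' : L'.card = L.card - 1 := by
    rw [hL'def]
    rw [Finset.card_erase_of_mem]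
    rw [hLdef]; simp [Finset.mem_filter, Finset.mem_powerset, hfx]
  have hfin : (L' ∪ U' ∪ M).card ≤ N.card := Finset.card_le_card hsubN
  rw [hcard1, hcardL', hcardU', hcardM] at hfin
  -- arithmetic
  rcases Nat.eq_zero_or_pos ZU.card with h0 | h0
  · rw [h0] at hcardU
    omega
  · have : ZL.card ≤ ZL.card * ZU.card := Nat.le_mul_of_pos_right _ h0
    omega
end

section
/- Let D ⊆ {0,1}^n be down-monotone (if y ∈ D and x ≤ y then x ∈ D), and suppose f : {0,1}^n → ℝ has non-increasing marginals on D, meaning for all x ≤ y in D with x_i = y_i = 0 and x + e_i, y + e_i ∈ D, f(x+e_i) − f(x) ≥ f(y+e_i) − f(y). If f(0) > 0, then f is nonzero on at least |D|/(n+1) points of D. -/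
theorem downset_submodular_pos_many_nonzero (n : ℕ)
    (D : Finset (Finset (Fin n)))
    (hdown : ∀ x y : Finset (Fin n), y ∈ D → x ⊆ y → x ∈ D)
    (h0D : ∅ ∈ D)
    (f : Finset (Fin n) → ℝ)
    (hf : ∀ (i : Fin n) (x y : Finset (Fin n)), x ⊆ y → i ∉ y →
      x ∈ D → y ∈ D → insert i x ∈ D → insert i y ∈ D →
      f (insert i y) - f y ≤ f (insert i x) - f x)
    (hpos : 0 < f ∅) :
    D.card ≤ (n + 1) * (D.filter (fun y => f y ≠ 0)).card := by
  classical
  -- Key lemma: if f y = 0 for y ∈ D, some element can be erased to get a nonzero value.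
  have key : ∀ y ∈ D, f y = 0 → ∃ i ∈ y, f (y.erase i) ≠ 0 := by
    intro y hyD hy0
    by_contra hcon
    push_neg at hcon
    have mono : ∀ x, x ⊆ y → f ∅ ≤ f x := by
      intro x
      induction x using Finset.strongInduction with
      | _ x ih =>
        intro hxy
        rcases x.eq_empty_or_nonempty with rfl | ⟨i, hi⟩
        · exact le_refl _
        · have hiy : i ∈ y := hxy hi
          have h1 : f (insert i (y.erase i)) - f (y.erase i) ≤
              f (insert i (x.erase i)) - f (x.erase i) := by
            refine hf i _ _ (Finset.erase_subset_erase i hxy) (Finset.notMem_erase i y)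
              (hdown _ y hyD ((Finset.erase_subset i x).trans hxy))
              (hdown _ y hyD (Finset.erase_subset i y)) ?_ ?_
            · rw [Finset.insert_erase hi]; exact hdown x y hyD hxy
            · rw [Finset.insert_erase hiy]; exact hyD
          rw [Finset.insert_erase hi, Finset.insert_erase hiy] at h1
          have h2 := hcon i hiy
          have h3 := ih (x.erase i) (Finset.erase_ssubset hi)
            ((Finset.erase_subset i x).trans hxy)
          linarith
    have := mono y (Finset.Subset.refl y)
    linarith
  -- the map
  set g : Finset (Fin n) → Finset (Fin n) := fun y =>
    if f y = 0 then
      (if h : ∃ i, i ∈ y ∧ f (y.erase i) ≠ 0 then y.erase h.choose else y)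
    else y with hg
  have hgspec : ∀ y ∈ D, (g y ∈ D ∧ f (g y) ≠ 0) ∧ (g y = y ∨ ∃ i ∈ y, g y = y.erase i) := by
    intro y hyD
    by_cases hfy : f y = 0
    · obtain ⟨i, hiy, hfi⟩ := key y hyD hfy
      have hex : ∃ i, i ∈ y ∧ f (y.erase i) ≠ 0 := ⟨i, hiy, hfi⟩
      have hgy : g y = y.erase hex.choose := by
        simp only [hg, hfy, if_true, dif_pos hex]
      obtain ⟨hj, hfj⟩ := hex.choose_spec
      refine ⟨⟨?_, ?_⟩, Or.inr ⟨hex.choose, hj, hgy⟩⟩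
      · rw [hgy]; exact hdown _ y hyD (Finset.erase_subset _ _)
      · rw [hgy]; exact hfj
    · have hgy : g y = y := by simp [hg, hfy]
      refine ⟨⟨?_, ?_⟩, Or.inl hgy⟩
      · rw [hgy]; exact hyD
      · rw [hgy]; exact hfy
  have himg : D.image g ⊆ D.filter (fun y => f y ≠ 0) := by
    intro a ha
    obtain ⟨y, hyD, rfl⟩ := Finset.mem_image.1 ha
    obtain ⟨⟨h1, h2⟩, _⟩ := hgspec y hyD
    exact Finset.mem_filter.2 ⟨h1, h2⟩
  have hfib : ∀ a ∈ D.image g, (D.filter fun y => g y = a).card ≤ n + 1 := by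
    intro a _
    have hsub : (D.filter fun y => g y = a) ⊆
        insert a (Finset.univ.image (fun i : Fin n => insert i a)) := by
      intro y hy
      obtain ⟨hyD, hga⟩ := Finset.mem_filter.1 hy
      obtain ⟨_, hcase⟩ := hgspec y hyD
      rcases hcase with hgy | ⟨i, hiy, hgy⟩
      · rw [← hga, hgy]; exact Finset.mem_insert_self _ _
      · have : insert i a = y := by
          rw [← hga, hgy, Finset.insert_erase hiy]
        refine Finset.mem_insert_of_mem (Finset.mem_image.2 ⟨i, Finset.mem_univ i, this⟩)
    calc (D.filter fun y => g y = a).card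
        ≤ (insert a (Finset.univ.image (fun i : Fin n => insert i a))).card :=
          Finset.card_le_card hsub
      _ ≤ (Finset.univ.image (fun i : Fin n => insert i a)).card + 1 :=
          Finset.card_insert_le _ _
      _ ≤ n + 1 := by
          have := Finset.card_image_le (s := (Finset.univ : Finset (Fin n)))
            (f := fun i => insert i a)
          simp only [Finset.card_univ, Fintype.card_fin] at this
          omega
  calc D.card ≤ (n + 1) * (D.image g).card := Finset.card_le_mul_card_image (f := g) D (n + 1) hfib
    _ ≤ (n + 1) * (D.filter (fun y => f y ≠ 0)).card :=
        Nat.mul_le_mul_left _ (Finset.card_le_card himg)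
end

section
/- The downset bound is tight: for D = {0, e_1, ..., e_n} and f(x) = 1 − ||x||_1, f is submodular on D, f(0) = 1 > 0, and f is nonzero on exactly 1 = |D|/(n+1) point of D. -/
theorem downset_bound_tight (n : ℕ) :
    let D : Finset (Finset (Fin n)) :=
      insert ∅ (Finset.univ.image (fun i : Fin n => {i}))
    let f : Finset (Fin n) → ℝ := fun S => 1 - S.card
    (∀ x y : Finset (Fin n), y ∈ D → x ⊆ y → x ∈ D) ∧
    (∀ (i : Fin n) (x y : Finset (Fin n)), x ⊆ y → i ∉ y →
      x ∈ D → y ∈ D → insert i x ∈ D → insert i y ∈ D →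
      f (insert i y) - f y ≤ f (insert i x) - f x) ∧
    0 < f ∅ ∧
    (D.filter (fun S => f S ≠ 0)).card = 1 ∧
    D.card = n + 1 := by
  intro D f
  have hmem : ∀ S : Finset (Fin n), S ∈ D ↔ S = ∅ ∨ ∃ i : Fin n, S = {i} := by
    intro S
    simp [D, eq_comm]
  refine ⟨?_, ?_, ?_, ?_, ?_⟩
  · intro x y hy hxy
    rw [hmem] at hy ⊢
    rcases hy with rfl | ⟨i, rfl⟩
    · left; exact Finset.subset_empty.mp hxy
    · rcases Finset.subset_singleton_iff.mp hxy with rfl | rfl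
      · left; rfl
      · right; exact ⟨i, rfl⟩
  · intro i x y hxy hiy hx hy hix hiy'
    rw [hmem] at hiy'
    rcases hiy' with h | ⟨j, h⟩
    · exact absurd (Finset.mem_insert_self i y) (by rw [h]; simp)
    · have hy0 : y = ∅ := by
        have hyj : y ⊆ {j} := by rw [← h]; exact Finset.subset_insert _ _
        rcases Finset.subset_singleton_iff.mp hyj with h0 | h0
        · exact h0
        · exfalso
          have hij : i = j := by
            have hh := Finset.mem_insert_self i y
            rw [h] at hh; simpa using hh
          exact hiy (by rw [h0, hij]; exact Finset.mem_singleton_self j)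
      subst hy0
      rw [Finset.subset_empty.mp hxy]
  · simp [f]
  · have : D.filter (fun S => f S ≠ 0) = {∅} := by
      apply Finset.ext
      intro S
      simp only [Finset.mem_filter, Finset.mem_singleton, hmem]
      constructor
      · rintro ⟨h | ⟨i, rfl⟩, hf⟩
        · exact h
        · exact absurd (by simp [f]) hf
      · rintro rfl
        exact ⟨Or.inl rfl, by simp [f]⟩
    rw [this]; rfl
  · rw [Finset.card_insert_of_notMem (by simp),
      Finset.card_image_of_injective _ (fun a b h => by simpa using h)]
    simp
end

section
/- Let f : {0,1}^n → ℝ and let {x, x+e_i, x+e_j, x+e_i+e_j} be a violated square, i.e., f(x) + f(x+e_i+e_j) > f(x+e_i) + f(x+e_j). Define f̃(y) = f(y) − d for all y ≤ x, where d = f(x) + f(x+e_i+e_j) − f(x+e_i) − f(x+e_j), and f̃(y) = f(y) otherwise. Then the square at x is not violated for f̃, and every square not violated for f is not violated for f̃. -/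
/-! Lowering `f` by `d` on the principal down-set of `x` subtracts `d` times the indicator of
that down-set. Since a down-set closed under joins contains `a ⊔ b` only if it contains `a` and
`b`, and then also `a ⊓ b`, its indicator `χ` satisfies `χ a + χ b ≤ χ (a ⊓ b) + χ (a ⊔ b)`: the
shift can only repair squares, never break them. On the violated square at `x` itself only the
bottom corner lies in the down-set, so the shift lowers its defect by exactly `d` to `0`. -/

section Lattice

variable {α : Type*} [Lattice α] {P : α → Prop} [DecidablePred P]

theorem ite_add_ite_le_of_sup_iff (hP : ∀ a b, P (a ⊔ b) ↔ P a ∧ P b) {d : ℝ} (hd : 0 ≤ d)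
    (a b : α) :
    (if P a then d else 0) + (if P b then d else 0) ≤
      (if P (a ⊓ b) then d else 0) + (if P (a ⊔ b) then d else 0) := by
  have hP_anti : ∀ {c e : α}, e ≤ c → P c → P e := fun hec hc =>
    ((hP _ _).1 (by rwa [sup_eq_left.2 hec])).2
  have hP_inf_left : P a → P (a ⊓ b) := hP_anti inf_le_left
  have hP_inf_right : P b → P (a ⊓ b) := hP_anti inf_le_right
  by_cases ha : P a <;> by_cases hb : P b
  · simp [ha, hb, hP_inf_left ha, (hP a b).2 ⟨ha, hb⟩]
  · simp [ha, hb, hP_inf_left ha, hP a b]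
  · simp [ha, hb, hP_inf_right hb, hP a b]
  · simp only [ha, hb, if_false]
    split_ifs <;> linarith

theorem ite_sub_square_le (hP : ∀ a b, P (a ⊔ b) ↔ P a ∧ P b) {d : ℝ} (hd : 0 ≤ d)
    {f : α → ℝ} {a b lo up : α} (hlo : a ⊓ b = lo) (hup : a ⊔ b = up)
    (hf : f lo + f up ≤ f a + f b) :
    let g : α → ℝ := fun y => if P y then f y - d else f y
    g lo + g up ≤ g a + g b := by
  intro g
  subst hlo hup
  have hg : ∀ y, g y = f y - if P y then d else 0 := fun y => by
    simp only [g]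
    split_ifs <;> ring
  simp only [hg]
  linarith [ite_add_ite_le_of_sup_iff hP hd a b]

theorem ite_sub_square_eq (hP : ∀ a b, P (a ⊔ b) ↔ P a ∧ P b) (f : α → ℝ)
    {a b lo up : α} (hup : a ⊔ b = up) (hPlo : P lo) (ha : ¬ P a) (hb : ¬ P b) :
    let d : ℝ := f lo + f up - f a - f b
    let g : α → ℝ := fun y => if P y then f y - d else f y
    g lo + g up = g a + g b := by
  have hPup : ¬ P up := fun h => ha ((hP a b).1 (hup ▸ h)).1
  simp only [hPlo, hPup, ha, hb, if_true, if_false]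
  ring

end Lattice

namespace Finset

variable {ι : Type*} [DecidableEq ι]

theorem insert_inter_insert_of_ne {a b : ι} (h : a ≠ b) (s : Finset ι) :
    insert a s ∩ insert b s = s := by
  ext c
  simp only [mem_inter, mem_insert]
  constructor
  · rintro ⟨rfl | hc, rfl | hc'⟩
    exacts [absurd rfl h, hc', hc, hc]
  · exact fun hc => ⟨.inr hc, .inr hc⟩

theorem insert_union_insert (a b : ι) (s : Finset ι) :
    insert a s ∪ insert b s = insert b (insert a s) := by
  ext c
  simp only [mem_union, mem_insert]
  tauto

end Finset

theorem fix_violated_square_below_general (n : ℕ) (f : Finset (Fin n) → ℝ)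
    (x : Finset (Fin n)) (i j : Fin n) (hi : i ∉ x) (hj : j ∉ x)
    (hviol : f (insert i x) + f (insert j x) <
      f x + f (insert j (insert i x))) :
    let d : ℝ := f x + f (insert j (insert i x)) - f (insert i x) - f (insert j x)
    let ft : Finset (Fin n) → ℝ := fun y => if y ⊆ x then f y - d else f y
    (ft x + ft (insert j (insert i x)) ≤ ft (insert i x) + ft (insert j x)) ∧
    (∀ (x' : Finset (Fin n)) (i' j' : Fin n), i' ≠ j' → i' ∉ x' → j' ∉ x' →
      f x' + f (insert j' (insert i' x')) ≤ f (insert i' x') + f (insert j' x') →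
      ft x' + ft (insert j' (insert i' x')) ≤
        ft (insert i' x') + ft (insert j' x')) := by
  intro d ft
  have hP : ∀ a b : Finset (Fin n), a ⊔ b ⊆ x ↔ a ⊆ x ∧ b ⊆ x :=
    fun _ _ => Finset.union_subset_iff
  refine ⟨?_, fun x' i' j' hij' _ _ hsq => ?_⟩
  · have hix : ¬ insert i x ⊆ x := fun h => hi (h (Finset.mem_insert_self i x))
    have hjx : ¬ insert j x ⊆ x := fun h => hj (h (Finset.mem_insert_self j x))
    exact (ite_sub_square_eq (P := (· ⊆ x)) hP f (Finset.insert_union_insert i j x)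
      subset_rfl hix hjx).le
  · have hd : 0 ≤ d := by simp only [d]; linarith
    exact ite_sub_square_le (P := (· ⊆ x)) hP hd (Finset.insert_inter_insert_of_ne hij' x')
      (Finset.insert_union_insert i' j' x') hsq

theorem fix_violated_square_below (n : ℕ) (f : Finset (Fin n) → ℝ)
    (x : Finset (Fin n)) (i j : Fin n) (hij : i ≠ j) (hi : i ∉ x) (hj : j ∉ x)
    (hviol : f (insert i x) + f (insert j x) <
      f x + f (insert j (insert i x))) :
    let d : ℝ := f x + f (insert j (insert i x)) - f (insert i x) - f (insert j x)
    let ft : Finset (Fin n) → ℝ := fun y => if y ⊆ x then f y - d else f y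
    (ft x + ft (insert j (insert i x)) ≤ ft (insert i x) + ft (insert j x)) ∧
    (∀ (x' : Finset (Fin n)) (i' j' : Fin n), i' ≠ j' → i' ∉ x' → j' ∉ x' →
      f x' + f (insert j' (insert i' x')) ≤ f (insert i' x') + f (insert j' x') →
      ft x' + ft (insert j' (insert i' x')) ≤
        ft (insert i' x') + ft (insert j' x')) :=
  fix_violated_square_below_general n f x i j hi hj hviol
end

section
/- With g constructed from f as above (g(0,x) = h(x), g(1,x) = f(x) + h(x)): if f is ε-far from being monotone non-increasing (every monotone non-increasing f' differs from f on more than ε·2^n points), then g is ε/2-far from being submodular (every submodular g' differs from g on more than (ε/2)·2^{n+1} points). -/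
/-!
Let `g'` be submodular. Its marginal `f' x = g'(1, x) - g'(0, x)` in the extra coordinate is
monotone non-increasing, so by hypothesis it differs from `f` on more than `ε 2ⁿ` points `x`.
Since `f x = g(1, x) - g(0, x)`, at each such `x` the function `g'` differs from `g` at `(0, x)` or
at `(1, x)`; choosing one of these two points for each `x` is injective, hence `g'` differs from
`g` on more than `ε 2ⁿ = (ε / 2) 2ⁿ⁺¹` points.
-/

/-- The `x`-part of a point `(b, x) ∈ {0,1}^{n+1}`, where coordinate `0` is the extra bit. -/
noncomputable def projTail (n : ℕ) (S : Finset (Fin (n + 1))) : Finset (Fin n) :=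
  S.preimage Fin.succ (Fin.succ_injective n).injOn

open Finset Function

def IsSubmodular {α β : Type*} [DecidableEq α] [Add β] [LE β] (g : Finset α → β) : Prop :=
  ∀ (z : Finset α) (i j : α), i ≠ j → i ∉ z → j ∉ z →
    g z + g (insert j (insert i z)) ≤ g (insert i z) + g (insert j z)

section Marginal

variable {α β : Type*} [DecidableEq α] [AddCommGroup β] [PartialOrder β] [IsOrderedAddMonoid β]
  {g : Finset α → β}

def marginal (g : Finset α → β) (a : α) (x : Finset α) : β :=
  g (insert a x) - g x

lemma IsSubmodular.marginal_insert_le (hg : IsSubmodular g) {a j : α} {x : Finset α}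
    (ha : a ∉ x) (hj : j ∉ x) (hja : j ≠ a) : marginal g a (insert j x) ≤ marginal g a x := by
  rw [marginal, marginal, insert_comm, sub_le_sub_iff]
  exact (add_comm _ _).trans_le (hg x a j hja.symm ha hj)

lemma IsSubmodular.antitone_marginal_map {γ : Type*} (hg : IsSubmodular g) (e : γ ↪ α) {a : α}
    (ha : a ∉ Set.range e) : Antitone fun x : Finset γ => marginal g a (x.map e) := by
  classical
  refine antitone_iff_forall_insert_le.2 fun x j hj => ?_
  rw [map_insert]
  exact hg.marginal_insert_le (fun h => ha <| (mem_map.1 h).imp fun _ => And.right)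
    (by simpa using hj) fun h => ha ⟨j, h⟩

end Marginal

lemma card_filter_sub_ne_le {A B β : Type*} [Fintype A] [Fintype B] [Sub β] [DecidableEq β]
    (g g' : B → β) (f : A → β) (ι₀ ι₁ : A → B) (π : B → A)
    (h₀ : LeftInverse π ι₀) (h₁ : LeftInverse π ι₁) (hf : ∀ x, g (ι₁ x) - g (ι₀ x) = f x) :
    #{x | g' (ι₁ x) - g' (ι₀ x) ≠ f x} ≤ #{S | g' S ≠ g S} := by
  refine card_le_card_of_injOn (fun x => if g' (ι₀ x) = g (ι₀ x) then ι₁ x else ι₀ x) ?_ ?_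
  · intro x hx
    simp only [coe_filter, mem_univ, true_and, Set.mem_ofPred_eq] at hx ⊢
    split_ifs with h
    · exact fun h' => hx (by rw [h', h, hf])
    · exact h
  · intro x _ y _ hxy
    simpa only [apply_ite π, h₀ _, h₁ _, ite_self] using congrArg π hxy

lemma projTail_map_succEmb (n : ℕ) (x : Finset (Fin n)) :
    projTail n (x.map (Fin.succEmb n)) = x :=
  preimage_map (Fin.succEmb n) x

lemma projTail_insert_zero (n : ℕ) (S : Finset (Fin (n + 1))) :
    projTail n (insert 0 S) = projTail n S := by
  ext
  simp [projTail]

theorem far_from_monotone_implies_far_from_submodular (n : ℕ) (ε : ℝ)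
    (f : Finset (Fin n) → ℝ)
    (hfar : ∀ f' : Finset (Fin n) → ℝ,
      (∀ x y : Finset (Fin n), x ⊆ y → f' y ≤ f' x) →
      ε * 2 ^ n <
        ((Finset.univ.filter (fun S : Finset (Fin n) => f' S ≠ f S)).card : ℝ)) :
    let M : ℝ := f ∅
    let h : Finset (Fin n) → ℝ := fun x => M * x.card * ((n - x.card : ℕ) : ℝ)
    let g : Finset (Fin (n + 1)) → ℝ := fun S =>
      (if (0 : Fin (n + 1)) ∈ S then f (projTail n S) else 0) + h (projTail n S)
    ∀ g' : Finset (Fin (n + 1)) → ℝ,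
      (∀ (z : Finset (Fin (n + 1))) (i j : Fin (n + 1)), i ≠ j → i ∉ z → j ∉ z →
        g' z + g' (insert j (insert i z)) ≤ g' (insert i z) + g' (insert j z)) →
      (ε / 2) * 2 ^ (n + 1) <
        ((Finset.univ.filter
          (fun S : Finset (Fin (n + 1)) => g' S ≠ g S)).card : ℝ) := by
  intro M h g g' hsub
  set ι₀ : Finset (Fin n) → Finset (Fin (n + 1)) := fun x => x.map (Fin.succEmb n)
  have hg : ∀ x, g (insert 0 (ι₀ x)) - g (ι₀ x) = f x := fun x => by
    simp [g, ι₀, projTail_insert_zero, projTail_map_succEmb]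
  have hanti : Antitone fun x => marginal g' 0 (ι₀ x) :=
    IsSubmodular.antitone_marginal_map hsub (Fin.succEmb n) (by simp)
  calc (ε / 2) * 2 ^ (n + 1) = ε * 2 ^ n := by ring
    _ < #{x | marginal g' 0 (ι₀ x) ≠ f x} := hfar _ fun x y hxy => hanti hxy
    _ ≤ #{S | g' S ≠ g S} := by
      exact_mod_cast card_filter_sub_ne_le g g' f ι₀ (insert 0 ∘ ι₀) (projTail n)
        (projTail_map_succEmb n) (fun x => (projTail_insert_zero n _).trans
          (projTail_map_succEmb n x)) hg
end

section
/- Let n be even and f : {0,1}^{n+2} → ℝ defined by f(0,0,x) = ||x||_1, f(1,1,x) = 1 − ||x||_1, f(0,1,x) = f(1,0,x) = d_L(x), where L = {x*} is a single point with ||x*||_1 = n/2 and d_L(x) = ||x − x*||_1. Then f has exactly one violated square, namely {(0,0,x*), (0,1,x*), (1,0,x*), (1,1,x*)}. -/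
open scoped symmDiff

noncomputable def projTail2 (n : ℕ) (S : Finset (Fin (n + 2))) : Finset (Fin n) :=
  S.preimage (fun i : Fin n => i.succ.succ)
    (((Fin.succ_injective (n + 1)).comp (Fin.succ_injective n)).injOn)

lemma mem_projTail2 {n : ℕ} {S : Finset (Fin (n+2))} {k : Fin n} :
    k ∈ projTail2 n S ↔ (k.succ.succ : Fin (n+2)) ∈ S := Finset.mem_preimage

lemma fin_trichotomy {n : ℕ} (a : Fin (n+2)) :
    a = 0 ∨ a = 1 ∨ ∃ k : Fin n, a = k.succ.succ := by
  induction a using Fin.cases with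
  | zero => exact Or.inl rfl
  | succ i =>
    induction i using Fin.cases with
    | zero => exact Or.inr (Or.inl (Fin.succ_zero_eq_one))
    | succ k => exact Or.inr (Or.inr ⟨k, rfl⟩)

lemma projTail2_insert_zero {n : ℕ} (S : Finset (Fin (n+2))) :
    projTail2 n (insert 0 S) = projTail2 n S := by
  ext k; simp [mem_projTail2, (Fin.succ_ne_zero k.succ)]

lemma projTail2_insert_one {n : ℕ} (S : Finset (Fin (n+2))) :
    projTail2 n (insert 1 S) = projTail2 n S := by
  ext k; simp [mem_projTail2, Fin.succ_succ_ne_one k]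

lemma projTail2_insert_succ {n : ℕ} (S : Finset (Fin (n+2))) (k : Fin n) :
    projTail2 n (insert k.succ.succ S) = insert k (projTail2 n S) := by
  ext l; simp [mem_projTail2, Fin.succ_inj]

lemma image_projTail2 {n : ℕ} {S : Finset (Fin (n+2))} (h0 : (0 : Fin (n+2)) ∉ S)
    (h1 : (1 : Fin (n+2)) ∉ S) :
    (projTail2 n S).image (fun k : Fin n => k.succ.succ) = S := by
  ext a
  simp only [Finset.mem_image, mem_projTail2]
  constructor
  · rintro ⟨k, hk, rfl⟩; exact hk
  · intro ha
    rcases fin_trichotomy a with h | h | ⟨k, rfl⟩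
    · exact absurd (h ▸ ha) h0
    · exact absurd (h ▸ ha) h1
    · exact ⟨k, ha, rfl⟩

lemma projTail2_image {n : ℕ} (x : Finset (Fin n)) :
    projTail2 n (x.image (fun k : Fin n => k.succ.succ)) = x := by
  ext k
  simp [mem_projTail2, Fin.succ_inj]

lemma eq_image_iff {n : ℕ} {S : Finset (Fin (n+2))} {x : Finset (Fin n)}
    (h0 : (0 : Fin (n+2)) ∉ S) (h1 : (1 : Fin (n+2)) ∉ S) :
    S = x.image (fun k : Fin n => k.succ.succ) ↔ projTail2 n S = x := by
  constructor
  · rintro rfl; exact projTail2_image x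
  · rintro rfl; exact (image_projTail2 h0 h1).symm

lemma card_symmDiff_insert {n : ℕ} (x y : Finset (Fin n)) (k : Fin n) (hk : k ∉ x) :
    (((insert k x) ∆ y).card : ℝ) = ((x ∆ y).card : ℝ) + (if k ∈ y then -1 else 1) := by
  by_cases hy : k ∈ y
  · have hset : (insert k x) ∆ y = (x ∆ y).erase k := by
      ext a
      by_cases hak : a = k
      · subst hak; simp [Finset.mem_symmDiff, hy, hk]
      · simp [Finset.mem_symmDiff, Finset.mem_erase, hak]
    have hmem : k ∈ x ∆ y := by simp [Finset.mem_symmDiff, hk, hy]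
    rw [hset, Finset.card_erase_of_mem hmem, if_pos hy]
    have : 1 ≤ (x ∆ y).card := Finset.card_pos.mpr ⟨k, hmem⟩
    push_cast [Nat.cast_sub this]
    ring
  · have hset : (insert k x) ∆ y = insert k (x ∆ y) := by
      ext a
      by_cases hak : a = k
      · subst hak; simp [Finset.mem_symmDiff, hy, hk]
      · simp [Finset.mem_symmDiff, hak]
    have hmem : k ∉ x ∆ y := by simp [Finset.mem_symmDiff, hk, hy]
    rw [hset, Finset.card_insert_of_notMem hmem, if_neg hy]
    push_cast; ring

theorem one_point_lattice_one_violated_square (n : ℕ) (hn : Even n)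
    (xstar : Finset (Fin n)) (hx : xstar.card = n / 2) :
    let f : Finset (Fin (n + 2)) → ℝ := fun S =>
      if (0 : Fin (n + 2)) ∈ S then
        (if (1 : Fin (n + 2)) ∈ S then 1 - ((projTail2 n S).card : ℝ)
          else (((projTail2 n S) ∆ xstar).card : ℝ))
      else
        (if (1 : Fin (n + 2)) ∈ S then (((projTail2 n S) ∆ xstar).card : ℝ)
          else ((projTail2 n S).card : ℝ))
    ∀ (S : Finset (Fin (n + 2))) (i j : Fin (n + 2)), i ≠ j → i ∉ S → j ∉ S →
      (f (insert i S) + f (insert j S) < f S + f (insert j (insert i S)) ↔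
        (S = xstar.image (fun i : Fin n => i.succ.succ) ∧
          ((i = 0 ∧ j = 1) ∨ (i = 1 ∧ j = 0)))) := by
  intro f S i j hij hi hj
  have h01 : (0 : Fin (n+2)) ≠ 1 := by
    intro h; exact absurd (Fin.val_eq_of_eq h) (by simp)
  have h10 : (1 : Fin (n+2)) ≠ 0 := h01.symm
  have hs0 : ∀ k : Fin n, (k.succ.succ : Fin (n+2)) ≠ 0 := fun k => Fin.succ_ne_zero _
  have hs1 : ∀ k : Fin n, (k.succ.succ : Fin (n+2)) ≠ 1 := fun k => Fin.succ_succ_ne_one k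
  have h0s : ∀ k : Fin n, (0 : Fin (n+2)) ≠ k.succ.succ := fun k => (hs0 k).symm
  have h1s : ∀ k : Fin n, (1 : Fin (n+2)) ≠ k.succ.succ := fun k => (hs1 k).symm
  -- main case helper
  have main : ∀ (h0 : (0:Fin (n+2)) ∉ S) (h1 : (1:Fin (n+2)) ∉ S),
      (f (insert 0 S) + f (insert 1 S) < f S + f (insert 1 (insert 0 S)) ↔
        S = xstar.image (fun i : Fin n => i.succ.succ)) := by
    intro h0 h1
    rw [eq_image_iff h0 h1]
    simp only [f, Finset.mem_insert, projTail2_insert_zero, projTail2_insert_one,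
      h0, h1, h01, h10, if_true, if_false, eq_self_iff_true, true_or, or_false, false_or,
      not_false_iff]
    constructor
    · intro h
      have hc : (projTail2 n S ∆ xstar).card = 0 := by
        by_contra hc
        have h1' : 1 ≤ (projTail2 n S ∆ xstar).card := Nat.one_le_iff_ne_zero.mpr hc
        have : (1:ℝ) ≤ ((projTail2 n S ∆ xstar).card : ℝ) := by exact_mod_cast h1'
        linarith
      have he : projTail2 n S ∆ xstar = ∅ := Finset.card_eq_zero.mp hc
      rw [← Finset.bot_eq_empty] at he
      exact symmDiff_eq_bot.mp he
    · intro h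
      rw [h, symmDiff_self]
      simp only [Finset.bot_eq_empty, Finset.card_empty, Nat.cast_zero]
      linarith
  rcases fin_trichotomy i with hi0 | hi1 | ⟨k, rfl⟩
  · subst hi0
    rcases fin_trichotomy j with hj0 | hj1 | ⟨l, rfl⟩
    · exact absurd hj0.symm hij
    · subst hj1
      rw [main hi hj]
      simp
    · -- i = 0, j = succ succ l
      have hl : l ∉ projTail2 n S := fun h => hj (mem_projTail2.mp h)
      simp only [f, Finset.mem_insert, projTail2_insert_zero, projTail2_insert_succ,
        hi, hj, h01, h10, hs0 l, hs1 l, h0s l, h1s l, eq_self_iff_true, true_or, or_false,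
        false_or, if_true, if_false, iff_false, not_lt,
        (h0s l : ¬ ((0:Fin (n+2)) = l.succ.succ)), and_false, false_and, or_self]
      rw [card_symmDiff_insert _ _ _ hl, Finset.card_insert_of_notMem hl]
      by_cases hb : (1:Fin (n+2)) ∈ S <;>
        simp only [hb, if_true, if_false] <;> push_cast <;> first | (split_ifs <;> linarith) | linarith
  · subst hi1
    rcases fin_trichotomy j with hj0 | hj1 | ⟨l, rfl⟩
    · subst hj0
      have key := main hj hi
      have hcomm : insert (0:Fin (n+2)) (insert 1 S) = insert 1 (insert 0 S) :=
        Finset.insert_comm _ _ _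
      rw [show f (insert 1 S) + f (insert 0 S) = f (insert 0 S) + f (insert 1 S) by ring,
        hcomm, key]
      simp [h01, h10]
    · exact absurd hj1.symm hij
    · -- i = 1, j = succ succ l
      have hl : l ∉ projTail2 n S := fun h => hj (mem_projTail2.mp h)
      simp only [f, Finset.mem_insert, projTail2_insert_one, projTail2_insert_succ,
        hi, hj, h01, h10, hs0 l, hs1 l, h0s l, h1s l, eq_self_iff_true, true_or, or_false,
        false_or, if_true, if_false, iff_false, not_lt, and_false, false_and, or_self]
      rw [card_symmDiff_insert _ _ _ hl, Finset.card_insert_of_notMem hl]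
      by_cases hb : (0:Fin (n+2)) ∈ S <;>
        simp only [hb, if_true, if_false] <;> push_cast <;> first | (split_ifs <;> linarith) | linarith
  · rcases fin_trichotomy j with hj0 | hj1 | ⟨l, rfl⟩
    · subst hj0
      have hk : k ∉ projTail2 n S := fun h => hi (mem_projTail2.mp h)
      simp only [f, Finset.mem_insert, projTail2_insert_zero, projTail2_insert_succ,
        hi, hj, h01, h10, hs0 k, hs1 k, h0s k, h1s k, eq_self_iff_true, true_or, or_false,
        false_or, if_true, if_false, iff_false, not_lt, and_false, false_and, or_self]
      rw [card_symmDiff_insert _ _ _ hk, Finset.card_insert_of_notMem hk]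
      by_cases hb : (1:Fin (n+2)) ∈ S <;>
        simp only [hb, if_true, if_false] <;> push_cast <;> first | (split_ifs <;> linarith) | linarith
    · subst hj1
      have hk : k ∉ projTail2 n S := fun h => hi (mem_projTail2.mp h)
      simp only [f, Finset.mem_insert, projTail2_insert_one, projTail2_insert_succ,
        hi, hj, h01, h10, hs0 k, hs1 k, h0s k, h1s k, eq_self_iff_true, true_or, or_false,
        false_or, if_true, if_false, iff_false, not_lt, and_false, false_and, or_self]
      rw [card_symmDiff_insert _ _ _ hk, Finset.card_insert_of_notMem hk]
      by_cases hb : (0:Fin (n+2)) ∈ S <;>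
        simp only [hb, if_true, if_false] <;> push_cast <;> first | (split_ifs <;> linarith) | linarith
    · -- i = succ succ k, j = succ succ l
      have hk : k ∉ projTail2 n S := fun h => hi (mem_projTail2.mp h)
      have hl : l ∉ projTail2 n S := fun h => hj (mem_projTail2.mp h)
      have hkl : k ≠ l := fun h => hij (by rw [h])
      have hl' : l ∉ insert k (projTail2 n S) := by
        simp [Finset.mem_insert, hkl.symm, hl]
      simp only [f, Finset.mem_insert, projTail2_insert_succ,
        hi, hj, hs0 k, hs1 k, h0s k, h1s k, hs0 l, hs1 l, h0s l, h1s l,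
        eq_self_iff_true, false_or, if_true, if_false, iff_false, not_lt,
        and_false, false_and, or_self]
      rw [card_symmDiff_insert _ _ _ hl', card_symmDiff_insert _ _ _ hk,
        card_symmDiff_insert _ _ _ hl,
        Finset.card_insert_of_notMem hk, Finset.card_insert_of_notMem hl,
        Finset.card_insert_of_notMem hl']
      rw [Finset.card_insert_of_notMem hk]
      by_cases ha : (0:Fin (n+2)) ∈ S <;> by_cases hb : (1:Fin (n+2)) ∈ S <;>
        simp only [ha, hb, if_true, if_false] <;> push_cast <;> first | (split_ifs <;> linarith) | linarith
end
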